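/- For a Gamma random variable X with shape α ≥ 2 and rate β > 0, P(X ≥ x) ≤ exp(−2α·h(βx/α)) for all x > α/β, where h(x) = (1/2)(x − 1 − log x). -/

import Mathlib

open MeasureTheory ProbabilityTheory Real Set

namespace ProbabilityTheory

lemma exp_mul_gammaPDFReal {α β t : ℝ} (hβ : 0 ≤ β) (ht : t < β) (y : ℝ) :
    exp (t * y) * gammaPDFReal α β y = (β / (β - t)) ^ α * gammaPDFReal α (β - t) y := by
  have hβt : 0 < β - t := sub_pos.mpr ht
  unfold gammaPDFReal
  split_ifs
  · have hβ_pow : β ^ α = (β / (β - t)) ^ α * (β - t) ^ α := by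
      rw [← mul_rpow (div_nonneg hβ hβt.le) hβt.le, div_mul_cancel₀ _ hβt.ne']
    rw [hβ_pow, show -((β - t) * y) = t * y + -(β * y) by ring, exp_add]
    ring
  · simp

lemma lintegral_exp_mul_gammaPDF {α β t : ℝ} (hα : 0 < α) (hβ : 0 ≤ β) (ht : t < β) :
    ∫⁻ y, ENNReal.ofReal (exp (t * y)) * gammaPDF α β y =
      ENNReal.ofReal ((β / (β - t)) ^ α) := by
  have hβt : 0 < β - t := sub_pos.mpr ht
  calc ∫⁻ y, ENNReal.ofReal (exp (t * y)) * gammaPDF α β y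
      = ∫⁻ y, ENNReal.ofReal ((β / (β - t)) ^ α) * gammaPDF α (β - t) y := by
        refine lintegral_congr fun y ↦ ?_
        rw [gammaPDF, gammaPDF, ← ENNReal.ofReal_mul (exp_pos _).le,
          ← ENNReal.ofReal_mul (by positivity), exp_mul_gammaPDFReal hβ ht]
    _ = ENNReal.ofReal ((β / (β - t)) ^ α) := by
        rw [lintegral_const_mul' _ _ ENNReal.ofReal_ne_top,
          lintegral_gammaPDF_eq_one hα hβt, mul_one]

/-- The Chernoff bound for the Gamma distribution, with the moment generating function
`(β / (β - t)) ^ α`. -/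
lemma gammaMeasure_Ici_le {α β t : ℝ} (hα : 0 < α) (ht₀ : 0 ≤ t) (ht : t < β) (x : ℝ) :
    gammaMeasure α β {y | x ≤ y} ≤ ENNReal.ofReal (exp (-t * x) * (β / (β - t)) ^ α) := by
  have hβ : 0 ≤ β := ht₀.trans ht.le
  calc gammaMeasure α β {y | x ≤ y} = ∫⁻ y in Ici x, gammaPDF α β y :=
        withDensity_apply _ measurableSet_Ici
    _ ≤ ∫⁻ y in Ici x, ENNReal.ofReal (exp (-t * x)) *
          (ENNReal.ofReal (exp (t * y)) * gammaPDF α β y) := by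
        refine setLIntegral_mono' measurableSet_Ici fun y (hy : x ≤ y) ↦ ?_
        have : 1 ≤ exp (-t * x) * exp (t * y) := by
          rw [← exp_add]
          exact one_le_exp (by nlinarith)
        rw [← mul_assoc, ← ENNReal.ofReal_mul (exp_pos _).le]
        exact le_mul_of_one_le_left' (ENNReal.one_le_ofReal.mpr this)
    _ ≤ ∫⁻ y, ENNReal.ofReal (exp (-t * x)) *
          (ENNReal.ofReal (exp (t * y)) * gammaPDF α β y) := setLIntegral_le_lintegral _ _
    _ = ENNReal.ofReal (exp (-t * x) * (β / (β - t)) ^ α) := by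
        rw [lintegral_const_mul' _ _ ENNReal.ofReal_ne_top, lintegral_exp_mul_gammaPDF hα hβ ht,
          ENNReal.ofReal_mul (exp_pos _).le]

end ProbabilityTheory

/-- Gamma tail bound: for `X ~ Gamma(α, β)` with shape `α ≥ 2` and rate `β > 0`,
`P(X ≥ x) ≤ exp(-2α h(βx/α))` for `x > α/β`, where `h(x) = (1/2)(x - 1 - log x)`. -/
theorem gamma_tail_bound (α β x : ℝ) (hα : 2 ≤ α) (hβ : 0 < β) (hx : α / β < x) :
    gammaMeasure α β {y | x ≤ y} ≤
      ENNReal.ofReal (Real.exp (-2 * α * ((1 / 2) * (β * x / α - 1 - Real.log (β * x / α))))) := by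
  have hα₀ : 0 < α := by linarith
  have hx₀ : 0 < x := (div_pos hα₀ hβ).trans hx
  have ht : α / x < β := (div_lt_iff₀ hx₀).mpr (by rwa [div_lt_iff₀' hβ] at hx)
  -- the optimal Chernoff parameter: `t = β - α / x` minimises `-t x + α log (β / (β - t))`
  refine (gammaMeasure_Ici_le hα₀ (sub_pos.mpr ht).le (sub_lt_self β (div_pos hα₀ hx₀)) x).trans_eq
    ?_
  have hβx : 0 < β * x / α := by positivity
  rw [sub_sub_cancel, show β / (α / x) = β * x / α by field_simp, rpow_def_of_pos hβx, ← exp_add]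
  congr 2
  field_simp
  ring
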